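/- Let S > 0, x ∈ R^d, u a unit vector with ⟨x, u⟩ ≥ S and ‖x − ⟨x,u⟩u‖ ≤ x_∨, and let ε := min(c S²/(4 x_∨), S/8) with c := 7/4 − (9/8)(1/4 + 9/8) > 0, and δ_S ≤ S/8. Then for all δx with ‖δx‖ ≤ δ_S and δw with ‖δw‖ ≤ ε: ‖x + δx‖² > ‖x + δx − S u + δw‖². -/

import Mathlib

/-!
Write `v := S u - δw`. Then `‖x + δx‖² - ‖x + δx - v‖² = 2⟪x + δx, v⟫ - ‖v‖²`. Since `δw` is small,
`⟪u, v⟫ ≥ 7S/8` and `‖v‖ ≤ 9S/8`; splitting `x` along `u` and `u^⊥` gives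
`⟪x, v⟫ ≥ 7S²/8 - x_∨ ‖δw‖`, while `|⟪δx, v⟫| ≤ (S/8)(9S/8)`. Altogether the difference is at least
`c S² - 2 x_∨ ‖δw‖ ≥ c S² / 2 > 0`.
-/

open RealInnerProductSpace

section

variable {E : Type*} [NormedAddCommGroup E] [InnerProductSpace ℝ E]

theorem inner_sub_inner_smul_self_of_norm_eq_one {u : E} (hu : ‖u‖ = 1) (x : E) :
    ⟪x - ⟪x, u⟫ • u, u⟫ = 0 := by
  rw [inner_sub_left, real_inner_smul_left, real_inner_self_eq_norm_sq, hu]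
  ring

theorem norm_smul_sub_le_of_norm_le {S : ℝ} (hS : 0 ≤ S) {u w : E} (hu : ‖u‖ = 1)
    (hw : ‖w‖ ≤ S / 8) : ‖S • u - w‖ ≤ 9 / 8 * S :=
  calc ‖S • u - w‖ ≤ ‖S • u‖ + ‖w‖ := norm_sub_le _ _
    _ ≤ S + S / 8 := by rw [norm_smul, hu, mul_one, Real.norm_of_nonneg hS]; linarith
    _ = 9 / 8 * S := by ring

theorem le_inner_smul_sub_of_norm_le {S : ℝ} {u w : E} (hu : ‖u‖ = 1) (hw : ‖w‖ ≤ S / 8) :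
    7 / 8 * S ≤ ⟪u, S • u - w⟫ := by
  have huw := real_inner_le_norm u w
  rw [hu, one_mul] at huw
  rw [inner_sub_right, real_inner_smul_right, real_inner_self_eq_norm_sq, hu]
  linarith

theorem le_inner_smul_sub_of_norm_sub_le {S ξ : ℝ} (hS : 0 ≤ S) {x u w : E} (hu : ‖u‖ = 1)
    (hxu : S ≤ ⟪x, u⟫) (hperp : ‖x - ⟪x, u⟫ • u‖ ≤ ξ) (hw : ‖w‖ ≤ S / 8) :
    7 / 8 * S ^ 2 - ξ * ‖w‖ ≤ ⟪x, S • u - w⟫ := by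
  set p := x - ⟪x, u⟫ • u
  have hsplit : ⟪x, S • u - w⟫ = ⟪x, u⟫ * ⟪u, S • u - w⟫ - ⟪p, w⟫ := by
    conv_lhs => rw [← add_sub_cancel (⟪x, u⟫ • u) x]
    rw [inner_add_left, real_inner_smul_left, inner_sub_right (x := p), real_inner_smul_right,
      inner_sub_inner_smul_self_of_norm_eq_one hu]
    ring
  have hpar : S * (7 / 8 * S) ≤ ⟪x, u⟫ * ⟪u, S • u - w⟫ :=
    mul_le_mul hxu (le_inner_smul_sub_of_norm_le hu hw) (by positivity) (hS.trans hxu)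
  have hort : ⟪p, w⟫ ≤ ξ * ‖w‖ :=
    (real_inner_le_norm _ _).trans (mul_le_mul_of_nonneg_right hperp (norm_nonneg _))
  linarith

theorem sub_le_norm_sq_sub_norm_sub_smul_sub_sq {S ξ : ℝ} (hS : 0 ≤ S) {x u δx w : E}
    (hu : ‖u‖ = 1) (hxu : S ≤ ⟪x, u⟫) (hperp : ‖x - ⟪x, u⟫ • u‖ ≤ ξ) (hδx : ‖δx‖ ≤ S / 8)
    (hw : ‖w‖ ≤ S / 8) :
    (7 / 4 - 9 / 8 * (1 / 4 + 9 / 8)) * S ^ 2 - 2 * ξ * ‖w‖ ≤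
      ‖x + δx‖ ^ 2 - ‖x + δx - (S • u - w)‖ ^ 2 := by
  have hv := norm_smul_sub_le_of_norm_le hS hu hw
  have hx := le_inner_smul_sub_of_norm_sub_le hS hu hxu hperp hw
  have hδxv : -(S / 8 * (9 / 8 * S)) ≤ ⟪δx, S • u - w⟫ := by
    have := abs_real_inner_le_norm δx (S • u - w)
    have := mul_le_mul hδx hv (norm_nonneg _) (by positivity)
    linarith [neg_abs_le ⟪δx, S • u - w⟫]
  have hv2 : ‖S • u - w‖ ^ 2 ≤ (9 / 8 * S) ^ 2 := pow_le_pow_left₀ (norm_nonneg _) hv 2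
  rw [norm_sub_sq_real, inner_add_left]
  linarith

end

theorem stmt_12_general {d : ℕ} (S δS xsup : ℝ) (hS : 0 < S)
    (hδ : δS ≤ S / 8)
    (x u : EuclideanSpace ℝ (Fin d)) (hu : ‖u‖ = 1)
    (hxu : S ≤ (inner ℝ x u : ℝ))
    (hperp : ‖x - (inner ℝ x u : ℝ) • u‖ ≤ xsup) :
    ∀ δx δw : EuclideanSpace ℝ (Fin d), ‖δx‖ ≤ δS →
      ‖δw‖ ≤ min ((7 / 4 - 9 / 8 * (1 / 4 + 9 / 8)) * S ^ 2 / (4 * xsup)) (S / 8) →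
      ‖x + δx - S • u + δw‖ ^ 2 < ‖x + δx‖ ^ 2 := by
  intro δx δw hδx hδw
  obtain ⟨hεc, hεS⟩ := le_min_iff.1 hδw
  have hxsup : 0 ≤ xsup := (norm_nonneg _).trans hperp
  have hεxsup : ‖δw‖ * (4 * xsup) ≤ (7 / 4 - 9 / 8 * (1 / 4 + 9 / 8)) * S ^ 2 :=
    mul_le_of_le_div₀ (by positivity) (by positivity) hεc
  have key := sub_le_norm_sq_sub_norm_sub_smul_sub_sq hS.le hu hxu hperp (hδx.trans hδ) hεS
  rw [sub_add]
  linarith [pow_pos hS 2]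

/-- For a unit vector `u` with `⟨x,u⟩ ≥ S` and `‖x − ⟨x,u⟩u‖ ≤ x_∨`, with
`ε := min (c S²/(4 x_∨)) (S/8)` where `c := 7/4 − (9/8)(1/4 + 9/8) > 0` and
`δ_S ≤ S/8`: for all `δx` with `‖δx‖ ≤ δ_S` and `δw` with `‖δw‖ ≤ ε`,
`‖x + δx‖² > ‖x + δx − S u + δw‖²`. -/
theorem stmt_12 {d : ℕ} (S δS xsup : ℝ) (hS : 0 < S) (hδ0 : 0 < δS)
    (hδ : δS ≤ S / 8) (hxsup : 0 < xsup)
    (x u : EuclideanSpace ℝ (Fin d)) (hu : ‖u‖ = 1)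
    (hxu : S ≤ (inner ℝ x u : ℝ))
    (hperp : ‖x - (inner ℝ x u : ℝ) • u‖ ≤ xsup) :
    ∀ δx δw : EuclideanSpace ℝ (Fin d), ‖δx‖ ≤ δS →
      ‖δw‖ ≤ min ((7 / 4 - 9 / 8 * (1 / 4 + 9 / 8)) * S ^ 2 / (4 * xsup)) (S / 8) →
      ‖x + δx - S • u + δw‖ ^ 2 < ‖x + δx‖ ^ 2 :=
  stmt_12_general S δS xsup hS hδ x u hu hxu hperp
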